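/- In G = ℚ ⋊_q M, let g = (c, s), let r ∈ ℚ, and let a = inl(r)⁻¹ · inr(t) · inl(r) ∈ M^r for some t ∈ M. Write a⁻¹ g a = (c', s). Then q(t)·(c' − r·(q(s) − 1)) = c − r·(q(s) − 1); in particular, if c' ≠ r·(q(s) − 1), then q(t) = (c − r·(q(s) − 1)) / (c' − r·(q(s) − 1)), so the action q(t) of the secret conjugator a ∈ M^r is recovered from g, gᵃ and r by one division in ℚ. -/

import Mathlib

/-- The semidirect product `G = ℚ ⋊_q M` of the additive group of `ℚ` by an abelian
group `M`, where `t : M` acts on `ℚ` by multiplication by `q t`.  Elements are pairs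
`⟨d, t⟩` with `d : ℚ`, `t : M`, multiplied by `⟨d, t⟩ * ⟨e, u⟩ = ⟨d + q t * e, t * u⟩`. -/
@[ext]
structure QSemidirect (M : Type*) [CommGroup M] (q : M →* ℚˣ) where
  fst : ℚ
  snd : M

namespace QSemidirect

variable {M : Type*} [CommGroup M] {q : M →* ℚˣ}

instance : Mul (QSemidirect M q) :=
  ⟨fun x y => ⟨x.fst + (q x.snd : ℚ) * y.fst, x.snd * y.snd⟩⟩

instance : One (QSemidirect M q) := ⟨⟨0, 1⟩⟩

instance : Inv (QSemidirect M q) :=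
  ⟨fun x => ⟨-((q x.snd : ℚ)⁻¹ * x.fst), x.snd⁻¹⟩⟩

@[simp] lemma mul_fst (x y : QSemidirect M q) :
    (x * y).fst = x.fst + (q x.snd : ℚ) * y.fst := rfl

@[simp] lemma mul_snd (x y : QSemidirect M q) : (x * y).snd = x.snd * y.snd := rfl

@[simp] lemma one_fst : (1 : QSemidirect M q).fst = 0 := rfl

@[simp] lemma one_snd : (1 : QSemidirect M q).snd = 1 := rfl

@[simp] lemma inv_fst (x : QSemidirect M q) :
    (x⁻¹).fst = -((q x.snd : ℚ)⁻¹ * x.fst) := rfl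

@[simp] lemma inv_snd (x : QSemidirect M q) : (x⁻¹).snd = x.snd⁻¹ := rfl

instance : Group (QSemidirect M q) where
  mul_assoc x y z := by
    ext
    · simp only [mul_fst, mul_snd, map_mul, Units.val_mul]; ring
    · simp [mul_assoc]
  one_mul x := by ext <;> simp
  mul_one x := by ext <;> simp
  inv_mul_cancel x := by
    ext
    · have h : (q x.snd : ℚ) ≠ 0 := Units.ne_zero _
      simp only [mul_fst, inv_fst, inv_snd, map_inv, Units.val_inv_eq_inv_val, one_fst]
      field_simp
      ring
    · simp

end QSemidirect

/-- If the Ko–Lee secret conjugator `a` lies in the conjugated complement `Mʳ`, then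
`q t * (c' - r * (q s - 1)) = c - r * (q s - 1)`, so `q t` is recovered from `g`, `gᵃ`
and `r` by one division in `ℚ`. -/
theorem koLee_recover_conjugated_secret (M : Type*) [CommGroup M] (q : M →* ℚˣ)
    (c c' r : ℚ) (s t : M)
    (h : ((⟨r, 1⟩ : QSemidirect M q)⁻¹ * ⟨0, t⟩ * ⟨r, 1⟩)⁻¹ * ⟨c, s⟩
        * ((⟨r, 1⟩ : QSemidirect M q)⁻¹ * ⟨0, t⟩ * ⟨r, 1⟩) = ⟨c', s⟩) :
    (q t : ℚ) * (c' - r * ((q s : ℚ) - 1)) = c - r * ((q s : ℚ) - 1)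
    ∧ (c' ≠ r * ((q s : ℚ) - 1) →
        (q t : ℚ) = (c - r * ((q s : ℚ) - 1)) / (c' - r * ((q s : ℚ) - 1))) := by
  have hf := congrArg QSemidirect.fst h
  simp only [QSemidirect.mul_fst, QSemidirect.mul_snd, QSemidirect.inv_fst,
    QSemidirect.inv_snd, map_one, map_mul, map_inv, Units.val_mul, Units.val_inv_eq_inv_val,
    Units.val_one, mul_one, one_mul, mul_zero, add_zero, zero_add] at hf
  have hqt : (q t : ℚ) ≠ 0 := Units.ne_zero _
  have key : (q t : ℚ) * (c' - r * ((q s : ℚ) - 1)) = c - r * ((q s : ℚ) - 1) := by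
    field_simp at hf
    ring_nf at hf ⊢
    linarith [hf]
  refine ⟨key, fun hne => ?_⟩
  have hd : c' - r * ((q s : ℚ) - 1) ≠ 0 := sub_ne_zero_of_ne hne
  field_simp
  linarith [key]
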